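/- One-step contraction implies final bound: if a nonnegative sequence r_τ satisfies r_{τ+1} ≤ (1 − η_τ μ) r_τ + η_τ² C for all τ, with μ, C > 0, η_τ ∈ [0, 1/μ] appropriately chosen (γ_τ ≤ 1/d with d = 1 ≥ μ), then for all T ≥ 1 there exists a choice of step sizes such that r_{T+1} ≤ 32 r_0 exp(−μT/2) + 36C/(μ² T). -/

import Mathlib

open Finset Real

/-! With step size 1 for the first `t₀ = ⌈T/2⌉` steps the recursion contracts by `1 - μ`, so
`r t₀ ≤ e^{-μ t₀} r 0 + C/μ`. Afterwards the step size `2/(2 + μ s)` makes the weighted quantity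
`(2 + μ s - μ)² r (t₀ + s)` grow by at most `4C` per step: with `D = 2 + μ s`, the recursion
multiplied by `D²` reads `D² r' ≤ (D - μ)² r + 4C`, and `D - μ` is the previous weight.
Dividing by the final weight, which is of order `(μ T)²`, gives the bound. -/

theorem le_pow_mul_add_mul_geom_sum {R : Type*} [CommSemiring R] [PartialOrder R]
    [IsOrderedRing R] {u : ℕ → R} {q b : R} (hq : 0 ≤ q) :
    ∀ {n : ℕ}, (∀ k < n, u (k + 1) ≤ q * u k + b) →
      u n ≤ q ^ n * u 0 + b * ∑ i ∈ range n, q ^ i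
  | 0, _ => by simp
  | n + 1, hu => by
    have ih := le_pow_mul_add_mul_geom_sum (n := n) hq fun k hk => hu k (by omega)
    calc u (n + 1) ≤ q * u n + b := hu n n.lt_succ_self
      _ ≤ q * (q ^ n * u 0 + b * ∑ i ∈ range n, q ^ i) + b := by gcongr
      _ = q ^ (n + 1) * u 0 + b * ∑ i ∈ range (n + 1), q ^ i := by
        rw [geom_sum_succ]; ring

theorem one_sub_pow_le_exp_neg_mul {μ : ℝ} (hμ : μ ≤ 1) (n : ℕ) :
    (1 - μ) ^ n ≤ exp (-(μ * n)) := by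
  calc (1 - μ) ^ n ≤ exp (-μ) ^ n := pow_le_pow_left₀ (by linarith) (one_sub_le_exp_neg μ) n
    _ = exp (-(μ * n)) := by rw [← exp_nat_mul]; ring_nf

theorem sq_mul_le_sub_sq_mul_add_of_step {D μ C x y : ℝ} (hD : 0 < D) (hx : 0 ≤ x)
    (h : y ≤ (1 - 2 / D * μ) * x + (2 / D) ^ 2 * C) :
    D ^ 2 * y ≤ (D - μ) ^ 2 * x + 4 * C := by
  have expand : D ^ 2 * ((1 - 2 / D * μ) * x + (2 / D) ^ 2 * C)
      = (D - μ) ^ 2 * x - μ ^ 2 * x + 4 * C := by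
    field_simp; ring
  calc D ^ 2 * y ≤ D ^ 2 * ((1 - 2 / D * μ) * x + (2 / D) ^ 2 * C) := by gcongr
    _ ≤ (D - μ) ^ 2 * x + 4 * C := by rw [expand]; nlinarith [sq_nonneg μ]

theorem le_add_div_of_two_phase {μ C S T x y E : ℝ} (hμ0 : 0 < μ) (hμ1 : μ ≤ 1) (hC : 0 ≤ C)
    (hE : 0 ≤ E) (hS : 1 ≤ S) (hT : 0 < T) (hTS : T ≤ 2 * S) (hx : x ≤ E + C / μ)
    (hy : (2 + μ * S - μ) ^ 2 * y ≤ (2 - μ) ^ 2 * x + 4 * C * S) :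
    y ≤ E + 16 * C / (μ ^ 2 * T) := by
  set W := 2 + μ * S - μ
  have hW : 1 + μ * S ≤ W := by linarith
  have hW0 : 0 < W := by nlinarith
  have h2μ : (2 - μ) ^ 2 ≤ W ^ 2 := by gcongr <;> nlinarith
  have h2μ' : (2 - μ) ^ 2 ≤ 4 := by nlinarith
  have hyW : W ^ 2 * y ≤ W ^ 2 * E + (4 * C / μ + 4 * C * S) := by
    have hCμ : 0 ≤ C / μ := by positivity
    calc W ^ 2 * y ≤ (2 - μ) ^ 2 * (E + C / μ) + 4 * C * S := by
          nlinarith [sq_nonneg (2 - μ)]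
      _ ≤ W ^ 2 * E + (4 * C / μ + 4 * C * S) := by
          rw [mul_div_assoc]; nlinarith
  have hrest : (4 * C / μ + 4 * C * S) / W ^ 2 ≤ 16 * C / (μ ^ 2 * T) := by
    rw [div_le_div_iff₀ (by positivity) (by positivity)]
    have hμS : μ * S ≤ W := by linarith
    have h1 : μ * T ≤ 2 * W ^ 2 := by
      nlinarith [mul_le_mul_of_nonneg_left hTS hμ0.le]
    have h2 : μ ^ 2 * S * T ≤ 2 * W ^ 2 := by
      have : (μ * S) ^ 2 ≤ W ^ 2 := by gcongr
      nlinarith [mul_le_mul_of_nonneg_left hTS (by positivity : 0 ≤ μ ^ 2 * S)]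
    have : (4 * C / μ + 4 * C * S) * (μ ^ 2 * T) = 4 * C * (μ * T) + 4 * C * (μ ^ 2 * S * T) := by
      field_simp
    rw [this]; nlinarith
  calc y ≤ E + (4 * C / μ + 4 * C * S) / W ^ 2 := by
        rw [← sub_le_iff_le_add', le_div_iff₀ (by positivity)]; linarith
    _ ≤ E + 16 * C / (μ ^ 2 * T) := by gcongr

noncomputable def twoPhaseStepSize (μ : ℝ) (t₀ τ : ℕ) : ℝ :=
  if τ < t₀ then 1 else 2 / (2 + μ * (τ - t₀ : ℕ))

theorem twoPhaseStepSize_nonneg_and_le_one {μ : ℝ} (hμ : 0 ≤ μ) (t₀ τ : ℕ) :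
    0 ≤ twoPhaseStepSize μ t₀ τ ∧ twoPhaseStepSize μ t₀ τ ≤ 1 := by
  unfold twoPhaseStepSize
  split_ifs
  · norm_num
  · have : (2 : ℝ) ≤ 2 + μ * (τ - t₀ : ℕ) := le_add_of_nonneg_right (by positivity)
    exact ⟨by positivity, (div_le_one (by linarith)).2 this⟩

section TwoPhase

variable {r : ℕ → ℝ} {μ C : ℝ} {t₀ : ℕ}
  (hrec : ∀ τ, r (τ + 1) ≤ (1 - twoPhaseStepSize μ t₀ τ * μ) * r τ +
    twoPhaseStepSize μ t₀ τ ^ 2 * C)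
include hrec

theorem le_exp_mul_add_div_of_twoPhaseStepSize (hr : 0 ≤ r 0) (hμ0 : 0 < μ) (hμ1 : μ ≤ 1)
    (hC : 0 ≤ C) : r t₀ ≤ exp (-(μ * t₀)) * r 0 + C / μ := by
  have hconst : ∀ k < t₀, r (k + 1) ≤ (1 - μ) * r k + C := fun k hk => by
    simpa [twoPhaseStepSize, hk] using hrec k
  have hgeom : ∑ i ∈ range t₀, (1 - μ) ^ i ≤ 1 / μ := by
    have h := geom_sum_Ico_le_of_lt_one (m := 0) (n := t₀) (x := 1 - μ) (by linarith)
      (by linarith)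
    rwa [← range_eq_Ico, pow_zero, sub_sub_cancel] at h
  calc r t₀ ≤ (1 - μ) ^ t₀ * r 0 + C * ∑ i ∈ range t₀, (1 - μ) ^ i :=
        le_pow_mul_add_mul_geom_sum (by linarith) hconst
    _ ≤ exp (-(μ * t₀)) * r 0 + C * (1 / μ) :=
        add_le_add (mul_le_mul_of_nonneg_right (one_sub_pow_le_exp_neg_mul hμ1 t₀) hr)
          (mul_le_mul_of_nonneg_left hgeom hC)
    _ = exp (-(μ * t₀)) * r 0 + C / μ := by rw [mul_one_div]

theorem sq_mul_le_add_of_twoPhaseStepSize (hr : ∀ τ, 0 ≤ r τ) (hμ : 0 ≤ μ) (s : ℕ) :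
    (2 + μ * s - μ) ^ 2 * r (t₀ + s) ≤ (2 - μ) ^ 2 * r t₀ + 4 * C * s := by
  have hstep : ∀ k < s, (2 + μ * (k + 1 : ℕ) - μ) ^ 2 * r (t₀ + (k + 1)) ≤
      1 * ((2 + μ * k - μ) ^ 2 * r (t₀ + k)) + 4 * C := fun k _ => by
    have h := hrec (t₀ + k)
    simp only [twoPhaseStepSize, Nat.not_lt.2 (Nat.le_add_right t₀ k), if_false,
      Nat.add_sub_cancel_left] at h
    have hcoeff : 2 + μ * ((k + 1 : ℕ) : ℝ) - μ = 2 + μ * k := by push_cast; ring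
    rw [hcoeff, one_mul, ← add_assoc]
    exact sq_mul_le_sub_sq_mul_add_of_step (by positivity) (hr _) h
  simpa using le_pow_mul_add_mul_geom_sum (u := fun s => (2 + μ * s - μ) ^ 2 * r (t₀ + s))
    zero_le_one hstep

end TwoPhase

/-- one-step contraction implies final bound (Stich's lemma with
s = 0, a = μ, c = C, d = 1). -/
theorem contraction_implies_final_bound
    (r : ℕ → ℝ) (hr : ∀ τ, 0 ≤ r τ)
    (μ C : ℝ) (hμ0 : 0 < μ) (hμ1 : μ ≤ 1) (hC : 0 < C) :
    ∀ T : ℕ, 1 ≤ T →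
      ∃ η : ℕ → ℝ, (∀ τ, 0 ≤ η τ ∧ η τ ≤ 1) ∧
        ((∀ τ, r (τ + 1) ≤ (1 - η τ * μ) * r τ + (η τ) ^ 2 * C) →
          r (T + 1) ≤ 32 * r 0 * Real.exp (-(μ * T) / 2) + 36 * C / (μ ^ 2 * T)) := by
  intro T hT
  set t₀ := (T + 1) / 2
  refine ⟨twoPhaseStepSize μ t₀, twoPhaseStepSize_nonneg_and_le_one hμ0.le t₀, fun hrec => ?_⟩
  obtain ⟨S, hS⟩ : ∃ S, T + 1 = t₀ + S := ⟨T + 1 - t₀, by omega⟩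
  have hS1 : (1 : ℝ) ≤ S := by exact_mod_cast (show 1 ≤ S by omega)
  have hTS : (T : ℝ) ≤ 2 * S := by exact_mod_cast (show T ≤ 2 * S by omega)
  have hT0 : (0 : ℝ) < T := by exact_mod_cast hT
  have phase₁ : r t₀ ≤ exp (-(μ * T) / 2) * r 0 + C / μ := by
    refine (le_exp_mul_add_div_of_twoPhaseStepSize hrec (hr 0) hμ0 hμ1 hC.le).trans ?_
    have : (T : ℝ) ≤ 2 * t₀ := by exact_mod_cast (show T ≤ 2 * t₀ by omega)
    gcongr
    · exact hr 0
    · nlinarith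
  have phase₂ := sq_mul_le_add_of_twoPhaseStepSize hrec hr hμ0.le S
  rw [← hS] at phase₂
  have hfinal := le_add_div_of_two_phase (E := exp (-(μ * T) / 2) * r 0) hμ0 hμ1 hC.le
    (mul_nonneg (exp_nonneg _) (hr 0)) hS1 hT0 hTS phase₁ phase₂
  calc r (T + 1) ≤ exp (-(μ * T) / 2) * r 0 + 16 * C / (μ ^ 2 * T) := hfinal
    _ ≤ 32 * r 0 * exp (-(μ * T) / 2) + 36 * C / (μ ^ 2 * T) := by
        gcongr ?_ + ?_
        · nlinarith [hr 0, exp_nonneg (-(μ * T) / 2)]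
        · exact div_le_div_of_nonneg_right (by linarith) (by positivity)
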